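/- Let n ≥ 3 and let Ω ⊂ ℝⁿ be a nonempty bounded open set satisfying the uniform exterior sphere condition with radius r₀ > 0. Suppose G, defined for pairs (x,y) ∈ Ω × Ω with x ≠ y, satisfies: (a) G(x,y) ≤ 0 for all x ≠ y; (b) for every y ∈ Ω the function x ↦ G(x,y) is harmonic on Ω \ {y} and extends continuously to cl(Ω) \ {y} with value 0 at every point of ∂Ω; (c) |G(x,y)| ≤ |x−y|^{2−n} for all x ≠ y in Ω. Then there exists a constant C > 0, depending only on n, r₀ and diam(Ω), such that |G(x,y)| ≤ C·|x−y|^{1−n}·δ(x) for all x, y ∈ Ω with x ≠ y. (Part (iv) of Theorem 3.1, n ≥ 3.) -/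

import Mathlib

open Metric

/-- The Euclidean Laplacian of a real-valued function on `ℝⁿ`. -/
noncomputable def laplacianR (n : ℕ) (u : EuclideanSpace ℝ (Fin n) → ℝ)
    (x : EuclideanSpace ℝ (Fin n)) : ℝ :=
  ∑ i : Fin n,
    fderiv ℝ (fun y => fderiv ℝ u y (EuclideanSpace.single i 1)) x (EuclideanSpace.single i 1)

/-- `u` is harmonic on `U`: twice continuously differentiable with vanishing Laplacian. -/
def HarmonicOnR (n : ℕ) (u : EuclideanSpace ℝ (Fin n) → ℝ)
    (U : Set (EuclideanSpace ℝ (Fin n))) : Prop :=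
  ContDiffOn ℝ 2 u U ∧ ∀ x ∈ U, laplacianR n u x = 0

/-- `Ω` satisfies the uniform exterior sphere condition with radius `r₀`. -/
def UnifExtSphere {n : ℕ} (Ω : Set (EuclideanSpace ℝ (Fin n))) (r₀ : ℝ) : Prop :=
  ∀ z ∈ frontier Ω, ∀ r : ℝ, 0 < r → r < r₀ →
    ∃ c : EuclideanSpace ℝ (Fin n),
      ball c r ⊆ (closure Ω)ᶜ ∧ closure (ball c r) ∩ closure Ω = {z}

/-!
Away from the boundary (`ρ = ‖x - y‖ ≤ 4d`, `d = dist(x, ∂Ω)`) the bound `|G(x, y)| ≤ ρ^(2-n)`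
already suffices. Otherwise let `z ∈ ∂Ω` be a nearest boundary point and `B(c, r)` an exterior
ball touching `∂Ω` at `z`, with `r = min(ρ / 16, r₀ / 2)`. On `Ω ∩ B(z, ρ / 4)` the function
`-G(·, y)` is harmonic, vanishes on `∂Ω` and is at most `(ρ / 2)^(2-n)` on the sphere
`‖t - z‖ = ρ / 4`. The harmonic barrier `(r^(2-n) - ‖t - c‖^(2-n)) / (r^(2-n) - (3r)^(2-n))` is
nonnegative on `Ω` and at least `1` on that sphere, so by the maximum principle `-G(x, y)` is at
most `(ρ / 2)^(2-n)` times its value at `x`, which is `O(d / r)` by the mean value theorem.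
-/

open Set Filter Topology InnerProductSpace Laplacian Module
open scoped RealInnerProductSpace

theorem IsLocalMax.deriv_deriv_nonpos {g : ℝ → ℝ} {a : ℝ} (h : IsLocalMax g a)
    (hc : ContinuousAt g a) : deriv (deriv g) a ≤ 0 := by
  by_contra! hpos
  -- a positive second derivative makes `a` also a local minimum, so `g` is constant near `a`
  have hmin : IsLocalMin g a := isLocalMin_of_deriv_deriv_pos hpos h.deriv_eq_zero hc
  have hconst : g =ᶠ[𝓝 a] fun _ => g a := by
    filter_upwards [h, hmin] with t h₁ h₂ using le_antisymm h₁ h₂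
  have hderiv : deriv g =ᶠ[𝓝 a] fun _ => 0 := by
    filter_upwards [hconst.eventuallyEq_nhds] with t ht
    rw [ht.deriv_eq, deriv_const]
  rw [hderiv.deriv_eq, deriv_const] at hpos
  exact hpos.false

section SecondDerivative

variable {E F : Type*} [NormedAddCommGroup E] [NormedSpace ℝ E] [NormedAddCommGroup F]
  [NormedSpace ℝ F]

theorem ContDiffAt.iteratedFDeriv_two_apply_eq_fderiv_apply {f : E → F} {x : E}
    (hf : ContDiffAt ℝ 2 f x) (u v : E) :
    iteratedFDeriv ℝ 2 f x ![u, v] = fderiv ℝ (fun y => fderiv ℝ f y v) x u := by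
  have hd : DifferentiableAt ℝ (fderiv ℝ f) x :=
    (hf.fderiv_right one_add_one_eq_two.le).differentiableAt one_ne_zero
  rw [iteratedFDeriv_two_apply, fderiv_clm_apply hd (differentiableAt_const v)]
  simp

theorem IsLocalMax.iteratedFDeriv_two_apply_self_nonpos {f : E → ℝ} {x : E} (h : IsLocalMax f x)
    (hf : ContDiffAt ℝ 2 f x) (v : E) : iteratedFDeriv ℝ 2 f x ![v, v] ≤ 0 := by
  set γ : ℝ → E := fun s => x + s • v
  have hγ : ∀ s, HasDerivAt γ v s := fun s => by
    simpa only [one_smul] using ((hasDerivAt_id' s).smul_const v).const_add x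
  have hγ0 : γ 0 = x := by simp [γ]
  have hγx : Tendsto γ (𝓝 0) (𝓝 x) := hγ0 ▸ (hγ 0).continuousAt.tendsto
  have hderiv : deriv (f ∘ γ) =ᶠ[𝓝 0] (fun y => fderiv ℝ f y v) ∘ γ := by
    filter_upwards [hγx.eventually (hf.eventually (by simp))] with s hs
    exact ((hs.differentiableAt (by simp)).hasFDerivAt.comp_hasDerivAt s (hγ s)).deriv
  have hmax : IsLocalMax (f ∘ γ) 0 := by
    filter_upwards [hγx.eventually h] with s hs
    simpa [hγ0] using hs
  have h2 := hmax.deriv_deriv_nonpos (hf.continuousAt.comp_of_eq (hγ 0).continuousAt hγ0)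
  have hd : DifferentiableAt ℝ (fun y => fderiv ℝ f y v) (γ 0) := by
    rw [hγ0]
    exact ((hf.fderiv_right one_add_one_eq_two.le).differentiableAt one_ne_zero).clm_apply
      (differentiableAt_const v)
  rw [hderiv.deriv_eq, (hd.hasFDerivAt.comp_hasDerivAt 0 (hγ 0)).deriv, hγ0] at h2
  rwa [hf.iteratedFDeriv_two_apply_eq_fderiv_apply]

end SecondDerivative

theorem Real.rpow_sub_rpow_le_of_nonpos {p r s : ℝ} (hp : p ≤ 0) (hr : 0 < r) (hrs : r ≤ s) :
    r ^ p - s ^ p ≤ -p * r ^ (p - 1) * (s - r) := by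
  have hpos : ∀ t ∈ Ici r, t ≠ 0 := fun t ht => (hr.trans_le ht).ne'
  have hderiv : ∀ t ∈ interior (Ici r), deriv (fun t => -t ^ p) t ≤ -p * r ^ (p - 1) := by
    intro t ht
    rw [interior_Ici] at ht
    rw [deriv.fun_neg, Real.deriv_rpow_const, ← neg_mul]
    exact mul_le_mul_of_nonneg_left (Real.rpow_le_rpow_of_nonpos hr ht.le (by linarith))
      (neg_nonneg.2 hp)
  have h := (convex_Ici r).image_sub_le_mul_sub_of_deriv_le
    (continuousOn_id.rpow_const fun t ht => Or.inl (hpos t ht)).neg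
    (fun t ht => (Real.differentiableAt_rpow_const_of_ne p
      (hpos t (interior_subset ht))).neg.differentiableWithinAt)
    hderiv r self_mem_Ici s hrs hrs
  simp only [Pi.neg_apply, id] at h
  linarith

theorem Bornology.IsBounded.exists_mem_frontier_infDist_eq_dist {E : Type*}
    [NormedAddCommGroup E] [NormedSpace ℝ E] [Nontrivial E] [ProperSpace E] {Ω : Set E}
    (hb : Bornology.IsBounded Ω) (hne : Ω.Nonempty) (x : E) :
    ∃ z ∈ frontier Ω, infDist x (frontier Ω) = dist x z :=
  (isCompact_of_isClosed_isBounded isClosed_frontier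
    (hb.closure.subset frontier_subset_closure)).exists_infDist_eq_dist
    (nonempty_frontier_iff.2 ⟨hne, fun h => NormedSpace.unbounded_univ ℝ E (h ▸ hb)⟩) x

section Laplacian

variable {E : Type*} [NormedAddCommGroup E] [InnerProductSpace ℝ E]

theorem iteratedFDeriv_two_comp_norm_sub_sq_apply_self {φ : ℝ → ℝ} {c x : E}
    (hφ : ContDiffAt ℝ 2 φ (‖x - c‖ ^ 2)) (v : E) :
    iteratedFDeriv ℝ 2 (fun t => φ (‖t - c‖ ^ 2)) x ![v, v] =
      4 * ⟪x - c, v⟫ ^ 2 * deriv (deriv φ) (‖x - c‖ ^ 2) + 2 * ‖v‖ ^ 2 * deriv φ (‖x - c‖ ^ 2) := by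
  have hQ : ∀ y, HasFDerivAt (fun t => ‖t - c‖ ^ 2) (2 • innerSL ℝ (y - c)) y := fun y => by
    simpa using HasFDerivAt.norm_sq ((hasFDerivAt_id (𝕜 := ℝ) y).sub_const c)
  have hQc : ContDiff ℝ 2 fun t : E => ‖t - c‖ ^ 2 := (contDiff_id.sub contDiff_const).norm_sq ℝ
  have hφ₁ : ∀ᶠ y in 𝓝 x, DifferentiableAt ℝ φ (‖y - c‖ ^ 2) :=
    hQc.continuous.continuousAt.eventually (hφ.eventually (by simp)) |>.mono
      fun y hy => hy.differentiableAt (by simp)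
  have hφ₂ : HasDerivAt (deriv φ) (deriv (deriv φ) (‖x - c‖ ^ 2)) (‖x - c‖ ^ 2) :=
    ((hφ.derivWithin (m := 1) (by norm_num)).differentiableAt one_ne_zero).hasDerivAt
  have hfirst : (fun y => fderiv ℝ (fun t => φ (‖t - c‖ ^ 2)) y v) =ᶠ[𝓝 x]
      fun y => deriv φ (‖y - c‖ ^ 2) * (2 * ⟪y - c, v⟫) := by
    filter_upwards [hφ₁] with y hy
    have h : HasFDerivAt (fun t => φ (‖t - c‖ ^ 2)) _ y :=
      hy.hasDerivAt.comp_hasFDerivAt y (hQ y)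
    rw [h.fderiv]
    simp [inner_sub_left]
  have hlin : HasFDerivAt (fun y => 2 * ⟪y - c, v⟫) ((2 : ℝ) • innerSL ℝ v) x := by
    refine ((((2 : ℝ) • innerSL ℝ v).hasFDerivAt (x := x)).sub_const
      (2 * ⟪c, v⟫)).congr_of_eventuallyEq (Eventually.of_forall fun y => ?_)
    simp [inner_sub_left, real_inner_comm]
    ring
  have hcomp := hφ₂.comp_hasFDerivAt x (hQ x)
  have hsecond : HasFDerivAt (fun y => deriv φ (‖y - c‖ ^ 2) * (2 * ⟪y - c, v⟫)) _ x :=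
    hcomp.fun_mul hlin
  have hf : ContDiffAt ℝ 2 (fun t => φ (‖t - c‖ ^ 2)) x := hφ.comp x hQc.contDiffAt
  rw [hf.iteratedFDeriv_two_apply_eq_fderiv_apply, hfirst.fderiv_eq, hsecond.fderiv]
  simp [inner_sub_left]
  ring

variable [FiniteDimensional ℝ E]

theorem IsLocalMax.laplacian_nonpos {f : E → ℝ} {x : E} (h : IsLocalMax f x)
    (hf : ContDiffAt ℝ 2 f x) : Δ f x ≤ 0 := by
  rw [laplacian_eq_iteratedFDeriv_stdOrthonormalBasis]
  exact Finset.sum_nonpos fun i _ => h.iteratedFDeriv_two_apply_self_nonpos hf _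

theorem laplacian_comp_norm_sub_sq {φ : ℝ → ℝ} {c x : E} (hφ : ContDiffAt ℝ 2 φ (‖x - c‖ ^ 2)) :
    Δ (fun t => φ (‖t - c‖ ^ 2)) x = 4 * ‖x - c‖ ^ 2 * deriv (deriv φ) (‖x - c‖ ^ 2)
      + 2 * finrank ℝ E * deriv φ (‖x - c‖ ^ 2) := by
  have b := stdOrthonormalBasis ℝ E
  have hsq : ∑ i, ⟪x - c, b i⟫ ^ 2 = ‖x - c‖ ^ 2 := by
    rw [← real_inner_self_eq_norm_sq, ← b.sum_inner_mul_inner]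
    simp [sq, real_inner_comm]
  have hunit : ∑ i, ‖b i‖ ^ 2 = (finrank ℝ E : ℝ) := by
    simp [b.orthonormal.1]
  simp only [laplacian_eq_iteratedFDeriv_orthonormalBasis _ b,
    iteratedFDeriv_two_comp_norm_sub_sq_apply_self hφ, Finset.sum_add_distrib, ← Finset.sum_mul,
    ← Finset.mul_sum, hsq, hunit]

theorem laplacian_norm_sub_sq (c x : E) :
    Δ (fun t => ‖t - c‖ ^ 2) x = 2 * finrank ℝ E := by
  simpa using laplacian_comp_norm_sub_sq (φ := fun s => s) (c := c) (x := x) contDiffAt_id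

theorem laplacian_norm_sub_rpow {c x : E} (hx : x ≠ c) (p : ℝ) :
    Δ (fun t => ‖t - c‖ ^ p) x = p * (finrank ℝ E + p - 2) * ‖x - c‖ ^ (p - 2) := by
  have hfun : (fun t => ‖t - c‖ ^ p) = fun t => (‖t - c‖ ^ 2) ^ (p / 2) := by
    ext t
    rw [← Real.rpow_natCast, ← Real.rpow_mul (norm_nonneg _)]
    ring_nf
  have hr : 0 < ‖x - c‖ := norm_pos_iff.2 (sub_ne_zero.2 hx)
  have hsq_rpow : ∀ a : ℝ, (‖x - c‖ ^ 2) ^ a = ‖x - c‖ ^ (2 * a) := fun a => by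
    rw [← Real.rpow_natCast, ← Real.rpow_mul hr.le, Nat.cast_ofNat]
  have e₁ : (‖x - c‖ ^ 2) ^ (p / 2 - 1) = ‖x - c‖ ^ (p - 2) := by
    rw [hsq_rpow]; ring_nf
  have e₂ : ‖x - c‖ ^ 2 * (‖x - c‖ ^ 2) ^ (p / 2 - 1 - 1) = ‖x - c‖ ^ (p - 2) := by
    rw [hsq_rpow, ← Real.rpow_natCast, ← Real.rpow_add hr]; ring_nf
  rw [hfun, laplacian_comp_norm_sub_sq (Real.contDiffAt_rpow_const_of_ne (by positivity)),
    Real.deriv_rpow_const', deriv_const_mul_field', Real.deriv_rpow_const']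
  linear_combination (p * (p - 2)) * e₂ + (finrank ℝ E * p) * e₁

theorem harmonicAt_norm_sub_rpow_two_sub_finrank {c x : E} (hx : x ≠ c) :
    HarmonicAt (fun t => ‖t - c‖ ^ (2 - finrank ℝ E : ℝ)) x := by
  refine ⟨?_, ?_⟩
  · have hr : ‖x - c‖ ≠ 0 := norm_ne_zero_iff.2 (sub_ne_zero.2 hx)
    exact (Real.contDiffAt_rpow_const_of_ne hr).comp x
      ((contDiffAt_norm ℝ (sub_ne_zero.2 hx)).comp x (contDiffAt_id.sub contDiffAt_const))
  · filter_upwards [isOpen_ne.mem_nhds hx] with y hy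
    rw [laplacian_norm_sub_rpow hy]
    simp

theorem IsOpen.exists_mem_frontier_le_of_laplacian_pos {U : Set E} (hU : IsOpen U)
    (hUb : Bornology.IsBounded U) {f : E → ℝ} (hfc : ContinuousOn f (closure U))
    (hf : ContDiffOn ℝ 2 f U) (hΔ : ∀ x ∈ U, 0 < Δ f x) {x : E} (hx : x ∈ U) :
    ∃ m ∈ frontier U, f x ≤ f m := by
  obtain ⟨m, hm, hmax⟩ := hUb.isCompact_closure.exists_isMaxOn ⟨x, subset_closure hx⟩ hfc
  refine ⟨m, ?_, hmax (subset_closure hx)⟩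
  rw [hU.frontier_eq]
  refine ⟨hm, fun hmU => (hΔ m hmU).not_ge ?_⟩
  have hloc : IsLocalMax f m := (hmax.on_subset subset_closure).isLocalMax (hU.mem_nhds hmU)
  exact hloc.laplacian_nonpos ((hf m hmU).contDiffAt (hU.mem_nhds hmU))

theorem IsOpen.nonpos_of_laplacian_nonneg [Nontrivial E] {U : Set E} (hU : IsOpen U)
    (hUb : Bornology.IsBounded U) {f : E → ℝ} (hfc : ContinuousOn f (closure U))
    (hf : ContDiffOn ℝ 2 f U) (hΔ : ∀ x ∈ U, 0 ≤ Δ f x) (hbd : ∀ x ∈ frontier U, f x ≤ 0) :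
    ∀ x ∈ U, f x ≤ 0 := by
  intro x hx
  -- perturb by `ε ‖t - x‖²`, whose Laplacian is positive, and let `ε → 0`
  have hε : ∀ ε > 0, f x ≤ ε * diam U ^ 2 := by
    intro ε hε
    have hq : ContDiff ℝ 2 fun t : E => ‖t - x‖ ^ 2 := (contDiff_id.sub contDiff_const).norm_sq ℝ
    have hΔg : ∀ t ∈ U, 0 < Δ (f + ε • fun t => ‖t - x‖ ^ 2) t := by
      intro t ht
      have hft := (hf t ht).contDiffAt (hU.mem_nhds ht)
      have hqt : ContDiffAt ℝ 2 (ε • fun t => ‖t - x‖ ^ 2) t := hq.contDiffAt.const_smul ε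
      rw [hft.laplacian_add hqt, laplacian_smul _ hq.contDiffAt, laplacian_norm_sub_sq,
        smul_eq_mul]
      have hΔt := hΔ t ht
      have hN : (0 : ℝ) < finrank ℝ E := Nat.cast_pos.2 finrank_pos
      positivity
    obtain ⟨m, hm, hle⟩ := hU.exists_mem_frontier_le_of_laplacian_pos hUb
      (hfc.add (hq.continuous.continuousOn.const_smul ε)) (hf.add (hq.contDiffOn.const_smul ε))
      hΔg hx
    have hmx : ‖m - x‖ ≤ diam U := by
      rw [← dist_eq_norm, ← diam_closure]
      exact dist_le_diam_of_mem hUb.closure (frontier_subset_closure hm) (subset_closure hx)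
    calc f x = (f + ε • fun t => ‖t - x‖ ^ 2) x := by simp
      _ ≤ (f + ε • fun t => ‖t - x‖ ^ 2) m := hle
      _ ≤ 0 + ε * diam U ^ 2 :=
        add_le_add (hbd m hm) (by simp only [Pi.smul_apply, smul_eq_mul]; gcongr)
      _ = ε * diam U ^ 2 := zero_add _
  have hlim : Tendsto (fun ε : ℝ => ε * diam U ^ 2) (𝓝[>] 0) (𝓝 0) := by
    simpa using (tendsto_nhdsWithin_of_tendsto_nhds (tendsto_id (x := 𝓝 (0 : ℝ)))).mul_const
      (diam U ^ 2)
  exact ge_of_tendsto hlim (eventually_nhdsWithin_of_forall hε)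

theorem IsOpen.le_of_harmonicOnNhd [Nontrivial E] {U : Set E} (hU : IsOpen U)
    (hUb : Bornology.IsBounded U) {u w : E → ℝ} (hu : HarmonicOnNhd u U)
    (hw : HarmonicOnNhd w U) (huc : ContinuousOn u (closure U))
    (hwc : ContinuousOn w (closure U)) (hbd : ∀ x ∈ frontier U, u x ≤ w x) :
    ∀ x ∈ U, u x ≤ w x := fun x hx =>
  have huw := hu.sub hw
  sub_nonpos.1 <| hU.nonpos_of_laplacian_nonneg hUb (huc.sub hwc) huw.contDiffOn
    (fun t ht => (huw t ht).2.self_of_nhds.ge) (fun t ht => sub_nonpos.2 (hbd t ht)) x hx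

end Laplacian

section Barrier

variable {E : Type*} [NormedAddCommGroup E] {p r : ℝ} {c t : E}

-- normalised to vanish on `‖t - c‖ = r` and to equal `1` on `‖t - c‖ = 3 r`
noncomputable def exteriorBarrier (p : ℝ) (c : E) (r : ℝ) (t : E) : ℝ :=
  (r ^ p - ‖t - c‖ ^ p) / (r ^ p - (3 * r) ^ p)

theorem exteriorBarrier_nonneg (hp : p < 0) (hr : 0 < r) (ht : r ≤ ‖t - c‖) :
    0 ≤ exteriorBarrier p c r t :=
  div_nonneg (sub_nonneg.2 (Real.rpow_le_rpow_of_nonpos hr ht hp.le))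
    (sub_pos.2 (Real.rpow_lt_rpow_of_neg hr (by linarith) hp)).le

theorem one_le_exteriorBarrier (hp : p < 0) (hr : 0 < r) (ht : 3 * r ≤ ‖t - c‖) :
    1 ≤ exteriorBarrier p c r t := by
  rw [exteriorBarrier, one_le_div (sub_pos.2 (Real.rpow_lt_rpow_of_neg hr (by linarith) hp))]
  have := Real.rpow_le_rpow_of_nonpos (by positivity) ht hp.le
  linarith

theorem exteriorBarrier_le (hp : p ≤ -1) (hr : 0 < r) (ht : r ≤ ‖t - c‖) :
    exteriorBarrier p c r t ≤ 3 / 2 * -p * (‖t - c‖ - r) / r := by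
  have hden : 2 / 3 * r ^ p ≤ r ^ p - (3 * r) ^ p := by
    have h3 : (3 : ℝ) ^ p ≤ 3 ^ (-1 : ℝ) := Real.rpow_le_rpow_of_exponent_le (by norm_num) hp
    rw [Real.rpow_neg_one] at h3
    rw [Real.mul_rpow (by norm_num) hr.le]
    nlinarith [Real.rpow_pos_of_pos hr p]
  have hnum := Real.rpow_sub_rpow_le_of_nonpos (p := p) (by linarith) hr ht
  rw [Real.rpow_sub_one hr.ne'] at hnum
  have hcoef : 0 ≤ 3 / 2 * -p * (‖t - c‖ - r) / r :=
    div_nonneg (mul_nonneg (by linarith) (by linarith)) hr.le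
  rw [exteriorBarrier,
    div_le_iff₀ (sub_pos.2 (Real.rpow_lt_rpow_of_neg hr (by linarith) (by linarith)))]
  calc r ^ p - ‖t - c‖ ^ p ≤ -p * (r ^ p / r) * (‖t - c‖ - r) := hnum
    _ = 3 / 2 * -p * (‖t - c‖ - r) / r * (2 / 3 * r ^ p) := by field_simp
    _ ≤ _ := mul_le_mul_of_nonneg_left hden hcoef

theorem harmonicAt_exteriorBarrier [InnerProductSpace ℝ E] [FiniteDimensional ℝ E] (r : ℝ)
    {x : E} (hx : x ≠ c) :
    HarmonicAt (exteriorBarrier (2 - finrank ℝ E) c r) x := by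
  have h := ((harmonicAt_const (r ^ (2 - finrank ℝ E : ℝ))).sub
    (harmonicAt_norm_sub_rpow_two_sub_finrank hx)).const_smul
    (c := (r ^ (2 - finrank ℝ E : ℝ) - (3 * r) ^ (2 - finrank ℝ E : ℝ))⁻¹)
  convert h using 1
  ext t
  simp [exteriorBarrier, div_eq_inv_mul]

end Barrier

theorem neg_le_of_le_four_mul_infDist {E : Type*} [NormedAddCommGroup E] [NormedSpace ℝ E]
    {Ω : Set E} {y : E} {g : E → ℝ}
    (hgy : ∀ t ∈ Ω, t ≠ y → -g t ≤ ‖t - y‖ ^ (2 - finrank ℝ E : ℝ)) {x : E} (hx : x ∈ Ω)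
    (hxy : x ≠ y) (hfar : ‖x - y‖ ≤ 4 * infDist x (frontier Ω)) :
    -g x ≤ 4 * ‖x - y‖ ^ (1 - finrank ℝ E : ℝ) * infDist x (frontier Ω) := by
  have hρ : 0 < ‖x - y‖ := norm_pos_iff.2 (sub_ne_zero.2 hxy)
  calc -g x ≤ ‖x - y‖ ^ (2 - finrank ℝ E : ℝ) := hgy x hx hxy
    _ = ‖x - y‖ ^ (1 - finrank ℝ E : ℝ) * ‖x - y‖ := by
      rw [← Real.rpow_add_one hρ.ne']
      ring_nf
    _ ≤ ‖x - y‖ ^ (1 - finrank ℝ E : ℝ) * (4 * infDist x (frontier Ω)) := by gcongr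
    _ = _ := by ring

def HasExteriorBalls {X : Type*} [PseudoMetricSpace X] (Ω : Set X) (r₀ : ℝ) : Prop :=
  ∀ z ∈ frontier Ω, ∀ r, 0 < r → r < r₀ → ∃ c, ball c r ⊆ (closure Ω)ᶜ ∧ dist z c ≤ r

section GreenFunction

variable {E : Type*} [NormedAddCommGroup E] [InnerProductSpace ℝ E] [FiniteDimensional ℝ E]
  {Ω : Set E} {r₀ : ℝ} {y : E} {g : E → ℝ}

theorem le_mul_exteriorBarrier (hdim : 3 ≤ finrank ℝ E) (hΩ : IsOpen Ω) {u : E → ℝ}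
    {z c : E} {r R M : ℝ} (hr : 0 < r) (hrR : 4 * r ≤ R) (hM : 0 ≤ M)
    (hc : ball c r ⊆ (closure Ω)ᶜ) (hzc : dist z c ≤ r)
    (hu : HarmonicOnNhd u (Ω ∩ ball z R)) (hcont : ContinuousOn u (closure (Ω ∩ ball z R)))
    (hsphere : ∀ t ∈ Ω, dist t z = R → u t ≤ M)
    (hfrontier : ∀ t ∈ frontier Ω, dist t z ≤ R → u t ≤ 0) :
    ∀ x ∈ Ω ∩ ball z R, u x ≤ M * exteriorBarrier (2 - finrank ℝ E) c r x := by
  have : Nontrivial E := Module.nontrivial_of_finrank_pos (R := ℝ) (by omega)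
  have hp : (2 - finrank ℝ E : ℝ) < 0 := by
    have : (3 : ℝ) ≤ finrank ℝ E := by exact_mod_cast hdim
    linarith
  have hclV : closure (Ω ∩ ball z R) ⊆ closure Ω ∩ closedBall z R :=
    closure_inter_subset.trans (inter_subset_inter_right _ closure_ball_subset_closedBall)
  have hfar : ∀ t ∈ closure Ω, r ≤ ‖t - c‖ := fun t ht => by
    by_contra! h
    exact hc (mem_ball_iff_norm.2 h) ht
  have hw : ∀ t ∈ closure (Ω ∩ ball z R),
      HarmonicAt (M • exteriorBarrier (2 - finrank ℝ E) c r) t := fun t ht =>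
    (harmonicAt_exteriorBarrier r
      (sub_ne_zero.1 (norm_pos_iff.1 (hr.trans_le (hfar t (hclV ht).1))))).const_smul
  refine (hΩ.inter isOpen_ball).le_of_harmonicOnNhd (isBounded_ball.subset inter_subset_right) hu
    (fun t ht => hw t (subset_closure ht)) hcont
    (fun t ht => (hw t ht).1.continuousAt.continuousWithinAt) fun t ht => ?_
  rw [(hΩ.inter isOpen_ball).frontier_eq] at ht
  obtain ⟨htV, htV'⟩ := ht
  by_cases htΩ : t ∈ Ω
  · have hdist : dist t z = R := le_antisymm (hclV htV).2 (not_lt.1 fun h => htV' ⟨htΩ, h⟩)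
    have h3r : 3 * r ≤ ‖t - c‖ := by
      rw [← dist_eq_norm]
      linarith [dist_triangle t c z, dist_comm z c]
    calc u t ≤ M := hsphere t htΩ hdist
      _ ≤ _ := le_mul_of_one_le_right hM (one_le_exteriorBarrier hp hr h3r)
  · have htfr : t ∈ frontier Ω := by
      rw [hΩ.frontier_eq]
      exact ⟨(hclV htV).1, htΩ⟩
    calc u t ≤ 0 := hfrontier t htfr (hclV htV).2
      _ ≤ _ := mul_nonneg hM (exteriorBarrier_nonneg hp hr (hfar t (hclV htV).1))

theorem neg_le_of_exterior_ball (hdim : 3 ≤ finrank ℝ E) (hΩo : IsOpen Ω)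
    (hΩb : Bornology.IsBounded Ω) (hball : HasExteriorBalls Ω r₀)
    (hg : HarmonicOnNhd g (Ω \ {y})) (hgc : ContinuousOn g (closure Ω \ {y}))
    (hg0 : ∀ t ∈ frontier Ω, g t = 0)
    (hgy : ∀ t ∈ Ω, t ≠ y → -g t ≤ ‖t - y‖ ^ (2 - finrank ℝ E : ℝ))
    {x : E} (hx : x ∈ Ω) (hnear : 4 * infDist x (frontier Ω) < ‖x - y‖)
    {r : ℝ} (hr : 0 < r) (hrρ : 16 * r ≤ ‖x - y‖) (hr₀ : r < r₀) :
    -g x ≤ (‖x - y‖ / 2) ^ (2 - finrank ℝ E : ℝ) *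
      (3 / 2 * (finrank ℝ E - 2) * infDist x (frontier Ω) / r) := by
  have : Nontrivial E := Module.nontrivial_of_finrank_pos (R := ℝ) (by omega)
  have hN : (3 : ℝ) ≤ finrank ℝ E := by exact_mod_cast hdim
  set ρ := ‖x - y‖
  set d := infDist x (frontier Ω)
  have hd : 0 ≤ d := infDist_nonneg
  have hρ : 0 < ρ := by linarith
  obtain ⟨z, hz, hdz⟩ := hΩb.exists_mem_frontier_infDist_eq_dist ⟨x, hx⟩ x
  obtain ⟨c, hc, hzc⟩ := hball z hz r hr hr₀
  have hxy : dist x y = ρ := dist_eq_norm x y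
  have hyz : 3 * ρ / 4 < dist y z := by linarith [dist_triangle x z y, dist_comm y z]
  have hclV : closure (Ω ∩ ball z (ρ / 4)) ⊆ closure Ω \ {y} := fun t ht => by
    have ht' := closure_inter_subset.trans
      (inter_subset_inter_right _ closure_ball_subset_closedBall) ht
    refine ⟨ht'.1, fun hty => ?_⟩
    rw [mem_singleton_iff.1 hty] at ht'
    linarith [mem_closedBall.1 ht'.2]
  have hsphere : ∀ t ∈ Ω, dist t z = ρ / 4 → -g t ≤ (ρ / 2) ^ (2 - finrank ℝ E : ℝ) := by
    intro t ht htz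
    have hty : ρ / 2 ≤ ‖t - y‖ := by
      rw [← dist_eq_norm]
      linarith [dist_triangle y t z, dist_comm y t]
    exact (hgy t ht fun h => by rw [h] at htz; linarith).trans
      (Real.rpow_le_rpow_of_nonpos (by linarith) hty (by linarith))
  have hbar := le_mul_exteriorBarrier hdim hΩo (u := -g) (R := ρ / 4) hr (by linarith)
    (by positivity) hc hzc (hg.neg.mono fun t ht => ⟨ht.1, (hclV (subset_closure ht)).2⟩)
    (hgc.neg.mono hclV) hsphere (fun t ht _ => by simp [hg0 t ht]) x
    ⟨hx, by rw [mem_ball, ← hdz]; linarith⟩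
  have hxc : r ≤ ‖x - c‖ := by
    by_contra! h
    exact hc (mem_ball_iff_norm.2 h) (subset_closure hx)
  have hxc' : ‖x - c‖ - r ≤ d := by
    rw [← dist_eq_norm]
    linarith [dist_triangle x z c]
  calc -g x ≤ (ρ / 2) ^ (2 - finrank ℝ E : ℝ) * exteriorBarrier (2 - finrank ℝ E) c r x := hbar
    _ ≤ (ρ / 2) ^ (2 - finrank ℝ E : ℝ) * (3 / 2 * (finrank ℝ E - 2) * (‖x - c‖ - r) / r) := by
      gcongr
      simpa using exteriorBarrier_le (p := 2 - finrank ℝ E) (by linarith) hr hxc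
    _ ≤ _ := by gcongr; linarith

theorem neg_le_of_four_mul_infDist_lt (hdim : 3 ≤ finrank ℝ E) (hΩo : IsOpen Ω)
    (hΩb : Bornology.IsBounded Ω) (hr₀ : 0 < r₀) (hball : HasExteriorBalls Ω r₀)
    (hy : y ∈ Ω) (hg : HarmonicOnNhd g (Ω \ {y})) (hgc : ContinuousOn g (closure Ω \ {y}))
    (hg0 : ∀ t ∈ frontier Ω, g t = 0)
    (hgy : ∀ t ∈ Ω, t ≠ y → -g t ≤ ‖t - y‖ ^ (2 - finrank ℝ E : ℝ))
    {x : E} (hx : x ∈ Ω) (hnear : 4 * infDist x (frontier Ω) < ‖x - y‖) :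
    -g x ≤ 3 / 2 * (finrank ℝ E - 2) * 2 ^ (finrank ℝ E - 2 : ℝ) * (16 + 2 * diam Ω / r₀) *
      ‖x - y‖ ^ (1 - finrank ℝ E : ℝ) * infDist x (frontier Ω) := by
  have hN : (3 : ℝ) ≤ finrank ℝ E := by exact_mod_cast hdim
  set ρ := ‖x - y‖
  set d := infDist x (frontier Ω)
  have hd : 0 ≤ d := infDist_nonneg
  have hρ : 0 < ρ := by linarith
  set r := min (ρ / 16) (r₀ / 2)
  have hr : 0 < r := lt_min (by positivity) (by positivity)
  have h := neg_le_of_exterior_ball hdim hΩo hΩb hball hg hgc hg0 hgy hx hnear hr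
    (by linarith [min_le_left (ρ / 16) (r₀ / 2)]) ((min_le_right _ _).trans_lt (by linarith))
  have hρr : ρ / r ≤ 16 + 2 * diam Ω / r₀ := by
    have hρD : ρ ≤ diam Ω := (dist_eq_norm x y).symm.trans_le (dist_le_diam_of_mem hΩb hx hy)
    rcases min_choice (ρ / 16) (r₀ / 2) with h | h <;> rw [show r = _ from h]
    · have : 0 ≤ 2 * diam Ω / r₀ := by positivity
      field_simp
      linarith
    · have : 2 * ρ / r₀ ≤ 2 * diam Ω / r₀ := by gcongr
      rw [div_div_eq_mul_div, mul_comm ρ 2]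
      linarith
  have hM : (ρ / 2) ^ (2 - finrank ℝ E : ℝ) =
      2 ^ (finrank ℝ E - 2 : ℝ) * ρ ^ (1 - finrank ℝ E : ℝ) * ρ := by
    rw [Real.div_rpow hρ.le zero_le_two, show (2 - finrank ℝ E : ℝ) = 1 - finrank ℝ E + 1 by ring,
      Real.rpow_add_one hρ.ne', show (1 - finrank ℝ E + 1 : ℝ) = -(finrank ℝ E - 2) by ring,
      Real.rpow_neg zero_le_two]
    field_simp
  calc -g x ≤ (ρ / 2) ^ (2 - finrank ℝ E : ℝ) * (3 / 2 * (finrank ℝ E - 2) * d / r) := h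
    _ = 3 / 2 * (finrank ℝ E - 2) * 2 ^ (finrank ℝ E - 2 : ℝ) * (ρ / r) *
        ρ ^ (1 - finrank ℝ E : ℝ) * d := by
      rw [hM]
      field_simp
    _ ≤ _ := by
      have : (0 : ℝ) ≤ finrank ℝ E - 2 := by linarith
      gcongr

theorem green_boundary_decay_of_hasExteriorBalls (hdim : 3 ≤ finrank ℝ E) (hΩo : IsOpen Ω)
    (hΩb : Bornology.IsBounded Ω) (hr₀ : 0 < r₀) (hball : HasExteriorBalls Ω r₀)
    (G : E → E → ℝ) (hneg : ∀ x ∈ Ω, ∀ y ∈ Ω, x ≠ y → G x y ≤ 0)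
    (hharm : ∀ y ∈ Ω, HarmonicOnNhd (fun x => G x y) (Ω \ {y}))
    (hext : ∀ y ∈ Ω, ∃ G' : E → ℝ, ContinuousOn G' (closure Ω \ {y}) ∧
      (∀ x ∈ Ω \ {y}, G' x = G x y) ∧ (∀ x ∈ frontier Ω, G' x = 0))
    (hbound : ∀ x ∈ Ω, ∀ y ∈ Ω, x ≠ y → |G x y| ≤ ‖x - y‖ ^ (2 - finrank ℝ E : ℝ)) :
    ∃ C > (0 : ℝ), ∀ x ∈ Ω, ∀ y ∈ Ω, x ≠ y →
      |G x y| ≤ C * ‖x - y‖ ^ (1 - finrank ℝ E : ℝ) * infDist x (frontier Ω) := by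
  have hq : (0 : ℝ) ≤ finrank ℝ E - 2 := by
    have : (3 : ℝ) ≤ finrank ℝ E := by exact_mod_cast hdim
    linarith
  set K := 3 / 2 * (finrank ℝ E - 2) * 2 ^ (finrank ℝ E - 2 : ℝ) * (16 + 2 * diam Ω / r₀)
  have hK : 0 ≤ K := by positivity
  refine ⟨4 + K, by positivity, fun x hx y hy hxy => ?_⟩
  obtain ⟨g, hgc, hgG, hg0⟩ := hext y hy
  have hg : HarmonicOnNhd g (Ω \ {y}) := fun t ht =>
    (harmonicAt_congr_nhds (eventually_of_mem ((hΩo.sdiff isClosed_singleton).mem_nhds ht) hgG)).2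
      (hharm y hy t ht)
  have hgy : ∀ t ∈ Ω, t ≠ y → -g t ≤ ‖t - y‖ ^ (2 - finrank ℝ E : ℝ) := fun t ht hty => by
    rw [hgG t ⟨ht, hty⟩]
    exact (neg_le_abs _).trans (hbound t ht y hy hty)
  have hd : 0 ≤ infDist x (frontier Ω) := infDist_nonneg
  rw [abs_of_nonpos (hneg x hx y hy hxy), ← hgG x ⟨hx, hxy⟩]
  rcases le_or_gt ‖x - y‖ (4 * infDist x (frontier Ω)) with hfar | hnear
  · exact (neg_le_of_le_four_mul_infDist hgy hx hxy hfar).trans (by gcongr; linarith)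
  · exact (neg_le_of_four_mul_infDist_lt hdim hΩo hΩb hr₀ hball hy hg hgc hg0 hgy hx hnear).trans
      (by gcongr; exact le_add_of_nonneg_left zero_le_four)

end GreenFunction

theorem laplacianR_eq_laplacian {n : ℕ} {u : EuclideanSpace ℝ (Fin n) → ℝ}
    {x : EuclideanSpace ℝ (Fin n)} (hu : ContDiffAt ℝ 2 u x) : laplacianR n u x = Δ u x := by
  rw [laplacian_eq_iteratedFDeriv_orthonormalBasis u (EuclideanSpace.basisFun (Fin n) ℝ)]
  simp [laplacianR, hu.iteratedFDeriv_two_apply_eq_fderiv_apply, EuclideanSpace.basisFun_apply]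

theorem HarmonicOnR.harmonicOnNhd {n : ℕ} {u : EuclideanSpace ℝ (Fin n) → ℝ}
    {U : Set (EuclideanSpace ℝ (Fin n))} (h : HarmonicOnR n u U) (hU : IsOpen U) :
    HarmonicOnNhd u U := fun x hx =>
  ⟨h.1.contDiffAt (hU.mem_nhds hx), by
    filter_upwards [hU.mem_nhds hx] with y hy
    rw [Pi.zero_apply, ← laplacianR_eq_laplacian (h.1.contDiffAt (hU.mem_nhds hy)), h.2 y hy]⟩

theorem UnifExtSphere.hasExteriorBalls {n : ℕ} {Ω : Set (EuclideanSpace ℝ (Fin n))} {r₀ : ℝ}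
    (h : UnifExtSphere Ω r₀) : HasExteriorBalls Ω r₀ := fun z hz r hr hr₀ => by
  obtain ⟨c, hc, hcz⟩ := h z hz r hr hr₀
  have hz' : z ∈ closure (ball c r) ∩ closure Ω := hcz ▸ mem_singleton z
  exact ⟨c, hc, mem_closedBall.1 (closure_ball_subset_closedBall hz'.1)⟩

theorem green_function_boundary_decay_dim_ge_three_general
    (n : ℕ) (hn : 3 ≤ n)
    (Ω : Set (EuclideanSpace ℝ (Fin n)))
    (hΩo : IsOpen Ω) (hΩb : Bornology.IsBounded Ω)
    (r₀ : ℝ) (hr₀ : 0 < r₀) (hsphere : UnifExtSphere Ω r₀)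
    (G : EuclideanSpace ℝ (Fin n) → EuclideanSpace ℝ (Fin n) → ℝ)
    (hneg : ∀ x ∈ Ω, ∀ y ∈ Ω, x ≠ y → G x y ≤ 0)
    (hharm : ∀ y ∈ Ω, HarmonicOnR n (fun x => G x y) (Ω \ {y}))
    (hext : ∀ y ∈ Ω, ∃ G' : EuclideanSpace ℝ (Fin n) → ℝ,
      ContinuousOn G' (closure Ω \ {y}) ∧
      (∀ x ∈ Ω \ {y}, G' x = G x y) ∧
      (∀ x ∈ frontier Ω, G' x = 0))
    (hbound : ∀ x ∈ Ω, ∀ y ∈ Ω, x ≠ y → |G x y| ≤ ‖x - y‖ ^ ((2 : ℝ) - n)) :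
    ∃ C > (0 : ℝ), ∀ x ∈ Ω, ∀ y ∈ Ω, x ≠ y →
      |G x y| ≤ C * ‖x - y‖ ^ ((1 : ℝ) - n) * infDist x (frontier Ω) := by
  have hfin : finrank ℝ (EuclideanSpace ℝ (Fin n)) = n := finrank_euclideanSpace_fin
  obtain ⟨C, hC, hdecay⟩ := green_boundary_decay_of_hasExteriorBalls (hn.trans hfin.ge) hΩo hΩb hr₀
    hsphere.hasExteriorBalls G hneg
    (fun y hy => (hharm y hy).harmonicOnNhd (hΩo.sdiff isClosed_singleton)) hext
    (by rwa [hfin])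
  exact ⟨C, hC, by rwa [hfin] at hdecay⟩

theorem green_function_boundary_decay_dim_ge_three
    (n : ℕ) (hn : 3 ≤ n)
    (Ω : Set (EuclideanSpace ℝ (Fin n)))
    (hΩo : IsOpen Ω) (hΩb : Bornology.IsBounded Ω) (hΩne : Ω.Nonempty)
    (r₀ : ℝ) (hr₀ : 0 < r₀) (hsphere : UnifExtSphere Ω r₀)
    (G : EuclideanSpace ℝ (Fin n) → EuclideanSpace ℝ (Fin n) → ℝ)
    (hneg : ∀ x ∈ Ω, ∀ y ∈ Ω, x ≠ y → G x y ≤ 0)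
    (hharm : ∀ y ∈ Ω, HarmonicOnR n (fun x => G x y) (Ω \ {y}))
    (hext : ∀ y ∈ Ω, ∃ G' : EuclideanSpace ℝ (Fin n) → ℝ,
      ContinuousOn G' (closure Ω \ {y}) ∧
      (∀ x ∈ Ω \ {y}, G' x = G x y) ∧
      (∀ x ∈ frontier Ω, G' x = 0))
    (hbound : ∀ x ∈ Ω, ∀ y ∈ Ω, x ≠ y → |G x y| ≤ ‖x - y‖ ^ ((2 : ℝ) - n)) :
    ∃ C > (0 : ℝ), ∀ x ∈ Ω, ∀ y ∈ Ω, x ≠ y →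
      |G x y| ≤ C * ‖x - y‖ ^ ((1 : ℝ) - n) * infDist x (frontier Ω) :=
  green_function_boundary_decay_dim_ge_three_general n hn Ω hΩo hΩb r₀ hr₀ hsphere G hneg hharm hext
    hbound
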